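/- arXiv:2301.04247 — 2 statements merged into one kernel-verified Lean document; each statement's English description precedes it below -/
import Mathlib

section
/- Let A be a C*-algebra, H a Hilbert A-module, and x ∈ H. For any 0 < α < 1/2 there exists y in the closed submodule generated by x (the closure of xA) such that ⟨y,y⟩^{1/2} = ⟨x,x⟩^{1/2−α} and x = y·⟨x,x⟩^α. -/
/-!
Write `a = ⟪x, x⟫` and approximate `t ↦ t ^ (-α)` from below by the continuous functions
`gₙ t = t ^ (1 - α) / (t + 1 / (n + 1))`, which vanish at `0`. For `sₙ = x · gₙ(a)` one has
`⟪sₘ, sₙ⟫ = (gₘ · id · gₙ)(a)`, and these functions increase to `t ^ (1 - 2α)`; by Dini's theorem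
the convergence is uniform on the spectrum, so the Gram matrix converges, `(sₙ)` is Cauchy, and its
limit `y` satisfies `⟪y, y⟫ = a ^ (1 - 2α)` and `⟪x, y⟫ = a ^ (1 - α)`. With these values
`⟪x - y · a ^ α, x - y · a ^ α⟫` expands to `0`.
-/

open scoped RightActions NNReal

/-- The Hilbert C⋆-module class as it stood in Mathlib (December 2024): a right `A`-module
(action `SMul Aᵐᵒᵖ E`) with an `A`-valued inner product, linear in the second argument. -/
class RightCStarModule (A : outParam <| Type*) (E : Type*) [NonUnitalSemiring A] [StarRing A]
    [Module ℂ A] [AddCommGroup E] [Module ℂ E] [PartialOrder A] [SMul Aᵐᵒᵖ E] [Norm A] [Norm E]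
    extends Inner A E where
  inner_add_right {x} {y} {z} : inner x (y + z) = inner x y + inner x z
  inner_self_nonneg {x} : 0 ≤ inner x x
  inner_self {x} : inner x x = 0 ↔ x = 0
  inner_op_smul_right {a : A} {x y : E} : inner x (y <• a) = inner x y * a
  inner_smul_right_complex {z : ℂ} {x} {y} : inner x (z • y) = z • inner x y
  star_inner x y : star (inner x y) = inner y x
  norm_eq_sqrt_norm_inner_self x : ‖x‖ = Real.sqrt ‖inner x x‖

open Filter Topology MulOpposite

namespace RightCStarModule

variable {A E : Type*} [NonUnitalCStarAlgebra A] [PartialOrder A] [NormedAddCommGroup E]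
    [NormedSpace ℂ E] [SMul Aᵐᵒᵖ E] [RightCStarModule A E]

/-- Mathlib's `CStarModule` is phrased with a left action; a right Hilbert `A`-module is a
`CStarModule` over `Aᵐᵒᵖ`, which brings Cauchy–Schwarz and continuity of the inner product. -/
instance : CStarModule Aᵐᵒᵖ E where
  inner x y := op (inner A x y)
  inner_add_right := congrArg op inner_add_right
  inner_self_nonneg {x} := op_nonneg.mpr (inner_self_nonneg (x := x))
  inner_self := by simp [inner_self]
  inner_op_smul_right := congrArg op inner_op_smul_right
  inner_smul_right_complex := congrArg op inner_smul_right_complex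
  star_inner x y := congrArg op (star_inner x y)
  norm_eq_sqrt_norm_inner_self x := by rw [norm_op]; exact norm_eq_sqrt_norm_inner_self x

lemma inner_sub_left {x y z : E} : inner A (x - y) z = inner A x z - inner A y z :=
  congrArg unop (CStarModule.inner_sub_left (A := Aᵐᵒᵖ) (x := x) (y := y) (z := z))

lemma inner_sub_right {x y z : E} : inner A x (y - z) = inner A x y - inner A x z :=
  congrArg unop (CStarModule.inner_sub_right (A := Aᵐᵒᵖ) (x := x) (y := y) (z := z))

lemma inner_op_smul_left {a : A} {x y : E} : inner A (x <• a) y = star a * inner A x y :=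
  congrArg unop (CStarModule.inner_op_smul_left (A := Aᵐᵒᵖ) (a := op a) (x := x) (y := y))

lemma eq_op_smul_of_inner_mul_eq {x y : E} {c : A} (hx : inner A x y * c = inner A x x)
    (hy : inner A y y * c = inner A y x) : x = y <• c := by
  rw [← sub_eq_zero, ← inner_self (A := A), inner_sub_left, inner_sub_right, inner_sub_right,
    inner_op_smul_right, inner_op_smul_left, inner_op_smul_left, inner_op_smul_right, hx, hy]
  simp

lemma cauchySeq_of_tendsto_inner {s : ℕ → E} {L : A}
    (h : Tendsto (fun p : ℕ × ℕ => inner A (s p.1) (s p.2)) atTop (𝓝 L)) : CauchySeq s := by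
  rw [← prod_atTop_atTop_eq] at h
  have h₁₁ : Tendsto (fun p : ℕ × ℕ => inner A (s p.1) (s p.1)) (atTop ×ˢ atTop) (𝓝 L) :=
    h.comp (tendsto_fst.prodMk tendsto_fst)
  have h₂₂ : Tendsto (fun p : ℕ × ℕ => inner A (s p.2) (s p.2)) (atTop ×ˢ atTop) (𝓝 L) :=
    h.comp (tendsto_snd.prodMk tendsto_snd)
  have h₂₁ : Tendsto (fun p : ℕ × ℕ => inner A (s p.2) (s p.1)) (atTop ×ˢ atTop) (𝓝 L) :=
    h.comp (tendsto_snd.prodMk tendsto_fst)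
  have hsub : Tendsto (fun p : ℕ × ℕ => inner A (s p.1 - s p.2) (s p.1 - s p.2))
      (atTop ×ˢ atTop) (𝓝 0) := by
    simp only [inner_sub_left, inner_sub_right]
    simpa using (h₁₁.sub h₂₁).sub (h.sub h₂₂)
  rw [cauchySeq_iff_tendsto_dist_atTop_0, ← prod_atTop_atTop_eq]
  simp only [dist_eq_norm, norm_eq_sqrt_norm_inner_self (A := A)]
  simpa [Function.comp_def] using
    (Real.continuous_sqrt.comp continuous_norm).tendsto (0 : A) |>.comp hsub

end RightCStarModule

section Dini

variable {A : Type*} [NonUnitalCStarAlgebra A] [PartialOrder A] [StarOrderedRing A]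

theorem tendsto_cfcₙ_nnreal_of_monotone {ι : Type*} [Preorder ι] {F : ι → ℝ≥0 → ℝ≥0}
    {f : ℝ≥0 → ℝ≥0} (a : A) (hF : ∀ i, Continuous (F i)) (hF0 : ∀ i, F i 0 = 0)
    (hF_mono : Monotone F) (hf : Continuous f) (hFf : ∀ t, Tendsto (F · t) atTop (𝓝 (f t))) :
    Tendsto (fun i => cfcₙ (F i) a) atTop (𝓝 (cfcₙ f a)) := by
  have hreal : TendstoUniformlyOn (fun i t => (F i t : ℝ)) (fun t => (f t : ℝ)) atTop
      (quasispectrum ℝ≥0 a) :=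
    Monotone.tendstoUniformlyOn_of_forall_tendsto (quasispectrum.isCompact_nnreal a)
      (fun i => (NNReal.continuous_coe.comp (hF i)).continuousOn)
      (fun t _ _ _ hij => NNReal.coe_le_coe.mpr (hF_mono hij t))
      (NNReal.continuous_coe.comp hf).continuousOn
      (fun t _ => NNReal.tendsto_coe.mpr (hFf t))
  refine tendsto_cfcₙ_fun ?_ (.of_forall fun i => (hF i).continuousOn) (.of_forall hF0)
  simpa [Function.comp_def] using
    Real.lipschitzWith_toNNReal.uniformContinuous.comp_tendstoUniformlyOn hreal

end Dini

namespace NNReal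

lemma mul_rpow_neg (t : ℝ≥0) {r : ℝ} (hr : r ≠ 1) : t * t ^ (-r) = t ^ (1 - r) := by
  rcases eq_or_ne t 0 with rfl | ht
  · simp [zero_rpow (sub_ne_zero.mpr hr.symm)]
  · rw [sub_eq_add_neg, rpow_add ht, rpow_one]

lemma rpow_neg_mul_mul_rpow_neg (t : ℝ≥0) {r : ℝ} (hr : 2 * r ≠ 1) :
    t ^ (-r) * (t * t ^ (-r)) = t ^ (1 - 2 * r) := by
  rcases eq_or_ne t 0 with rfl | ht
  · simp [zero_rpow (sub_ne_zero.mpr hr.symm)]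
  · rw [show 1 - 2 * r = 1 + (-r + -r) by ring, rpow_add ht, rpow_add ht, rpow_one]
    ring

end NNReal

noncomputable def negRpowApprox (r : ℝ) (n : ℕ) (t : ℝ≥0) : ℝ≥0 := t ^ (1 - r) / (t + 1 / (n + 1))

section negRpowApprox

variable {r : ℝ}

lemma continuous_negRpowApprox (hr : r < 1) (n : ℕ) : Continuous (negRpowApprox r n) :=
  (NNReal.continuous_rpow_const (by linarith)).div₀ (by fun_prop) fun t => by positivity

lemma negRpowApprox_zero (hr : r < 1) (n : ℕ) : negRpowApprox r n 0 = 0 := by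
  simp [negRpowApprox, NNReal.zero_rpow (sub_ne_zero.mpr hr.ne')]

lemma monotone_negRpowApprox : Monotone (negRpowApprox r) := by
  intro m n hmn t
  unfold negRpowApprox
  gcongr

lemma tendsto_negRpowApprox (hr₀ : 0 < r) (hr : r < 1) (t : ℝ≥0) :
    Tendsto (negRpowApprox r · t) atTop (𝓝 (t ^ (-r))) := by
  rcases eq_or_ne t 0 with rfl | ht
  · simp [negRpowApprox_zero hr, NNReal.zero_rpow (neg_ne_zero.mpr hr₀.ne')]
  · have hden : Tendsto (fun n : ℕ => t + 1 / (n + 1)) atTop (𝓝 t) := by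
      simpa using tendsto_const_nhds.add (tendsto_one_div_add_atTop_nhds_zero_nat (𝕜 := ℝ≥0))
    rw [show -r = 1 - r - 1 by ring, NNReal.rpow_sub_one ht]
    exact tendsto_const_nhds.div hden ht

end negRpowApprox

namespace RightCStarModule

variable {A E : Type*} [NonUnitalCStarAlgebra A] [PartialOrder A] [StarOrderedRing A]
    [NormedAddCommGroup E] [NormedSpace ℂ E] [SMul Aᵐᵒᵖ E] [RightCStarModule A E]

lemma continuous_inner : Continuous fun p : E × E => inner A p.1 p.2 :=
  continuous_unop.comp (CStarModule.continuous_inner (A := Aᵐᵒᵖ))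

lemma inner_op_smul_cfcₙ (x : E) {g : ℝ≥0 → ℝ≥0} (hg : Continuous g) (hg0 : g 0 = 0) :
    inner A x (x <• cfcₙ g (inner A x x)) = cfcₙ (fun t => t * g t) (inner A x x) := by
  rw [inner_op_smul_right, cfcₙ_mul (fun t => t) g _ continuous_id.continuousOn rfl
    hg.continuousOn hg0, cfcₙ_id' ℝ≥0 (inner A x x) inner_self_nonneg]

lemma inner_op_smul_cfcₙ_op_smul_cfcₙ (x : E) {f g : ℝ≥0 → ℝ≥0} (hf : Continuous f)
    (hf0 : f 0 = 0) (hg : Continuous g) (hg0 : g 0 = 0) :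
    inner A (x <• cfcₙ f (inner A x x)) (x <• cfcₙ g (inner A x x)) =
      cfcₙ (fun t => f t * (t * g t)) (inner A x x) := by
  rw [inner_op_smul_left, inner_op_smul_cfcₙ x hg hg0,
    (IsSelfAdjoint.of_nonneg (cfcₙ_predicate f _)).star_eq,
    cfcₙ_mul f (fun t => t * g t) _ hf.continuousOn hf0 (continuous_id.mul hg).continuousOn
      (by simp)]

lemma exists_tendsto_inner_self_eq [CompleteSpace E] {s : ℕ → E} {L : A}
    (h : Tendsto (fun p : ℕ × ℕ => inner A (s p.1) (s p.2)) atTop (𝓝 L)) :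
    ∃ y, Tendsto s atTop (𝓝 y) ∧ inner A y y = L := by
  obtain ⟨y, hy⟩ := cauchySeq_tendsto_of_complete (cauchySeq_of_tendsto_inner h)
  exact ⟨y, hy, tendsto_nhds_unique ((continuous_inner.tendsto (y, y)).comp (hy.prodMk_nhds hy))
    (h.comp tendsto_atTop_diagonal)⟩

theorem exists_mem_closure_inner_eq_cfcₙ [CompleteSpace E] (x : E) {g : ℕ → ℝ≥0 → ℝ≥0}
    {h : ℝ≥0 → ℝ≥0} (hg : ∀ n, Continuous (g n)) (hg0 : ∀ n, g n 0 = 0) (hg_mono : Monotone g)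
    (hgh : ∀ t, Tendsto (g · t) atTop (𝓝 (h t))) (hh₁ : Continuous fun t => t * h t)
    (hh₂ : Continuous fun t => h t * (t * h t)) :
    ∃ y ∈ closure {z : E | ∃ b : A, z = x <• b},
      inner A y y = cfcₙ (fun t => h t * (t * h t)) (inner A x x) ∧
      inner A x y = cfcₙ (fun t => t * h t) (inner A x x) := by
  set s : ℕ → E := fun n => x <• cfcₙ (g n) (inner A x x) with hs
  have hgram : Tendsto (fun p : ℕ × ℕ => inner A (s p.1) (s p.2)) atTop
      (𝓝 (cfcₙ (fun t => h t * (t * h t)) (inner A x x))) := by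
    simp only [hs, inner_op_smul_cfcₙ_op_smul_cfcₙ x (hg _) (hg0 _) (hg _) (hg0 _)]
    refine tendsto_cfcₙ_nnreal_of_monotone _ (fun p => (hg p.1).mul (continuous_id.mul (hg p.2)))
      (fun p => by simp [hg0]) (fun p q hpq t => ?_) hh₂ (fun t => ?_)
    · exact mul_le_mul' (hg_mono hpq.1 t) (mul_le_mul_right (hg_mono hpq.2 t) t)
    · rw [← prod_atTop_atTop_eq]
      exact ((hgh t).comp tendsto_fst).mul (tendsto_const_nhds.mul ((hgh t).comp tendsto_snd))
  have hcross : Tendsto (fun n => inner A x (s n)) atTop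
      (𝓝 (cfcₙ (fun t => t * h t) (inner A x x))) := by
    simp only [hs, inner_op_smul_cfcₙ x (hg _) (hg0 _)]
    exact tendsto_cfcₙ_nnreal_of_monotone _ (fun n => continuous_id.mul (hg n)) (by simp [hg0])
      (fun m n hmn t => mul_le_mul_right (hg_mono hmn t) t) hh₁
      (fun t => tendsto_const_nhds.mul (hgh t))
  obtain ⟨y, hy, hyy⟩ := exists_tendsto_inner_self_eq hgram
  exact ⟨y, mem_closure_of_tendsto hy (.of_forall fun n => ⟨_, rfl⟩), hyy, tendsto_nhds_unique
    ((continuous_inner.tendsto (x, y)).comp (tendsto_const_nhds.prodMk_nhds hy)) hcross⟩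

theorem exists_mem_closure_inner_eq_nnrpow [CompleteSpace E] (x : E) {α β : ℝ≥0} (hα₀ : 0 < α)
    (hβ₀ : 0 < β) (hβα : β + α = 1 / 2) :
    ∃ y ∈ closure {z : E | ∃ b : A, z = x <• b},
      inner A y y = inner A x x ^ (2 * β) ∧ inner A x y = inner A x x ^ (β + 1 / 2) := by
  have hα : (α : ℝ) = 1 / 2 - β := by
    rw [eq_sub_iff_add_eq', ← NNReal.coe_add, hβα]; norm_num
  have hβ' : (0 : ℝ) < β := hβ₀
  have hα₀' : (0 : ℝ) < α := hα₀
  have hα₁ : (α : ℝ) ≠ 1 := by linarith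
  have hα₂ : 2 * (α : ℝ) ≠ 1 := by linarith
  obtain ⟨y, hy, hyy, hxy⟩ := exists_mem_closure_inner_eq_cfcₙ x
    (continuous_negRpowApprox (by linarith)) (negRpowApprox_zero (by linarith))
    monotone_negRpowApprox (tendsto_negRpowApprox hα₀' (by linarith))
    (by simpa only [NNReal.mul_rpow_neg _ hα₁] using NNReal.continuous_rpow_const (by linarith))
    (by simpa only [NNReal.rpow_neg_mul_mul_rpow_neg _ hα₂] using
      NNReal.continuous_rpow_const (by linarith))
  refine ⟨y, hy, ?_, ?_⟩
  · rw [hyy, CFC.nnrpow_def]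
    refine cfcₙ_congr fun t _ => ?_
    rw [NNReal.rpow_neg_mul_mul_rpow_neg _ hα₂]
    push_cast [NNReal.nnrpow_def, hα]
    ring_nf
  · rw [hxy, CFC.nnrpow_def]
    refine cfcₙ_congr fun t _ => ?_
    rw [NNReal.mul_rpow_neg _ hα₁]
    push_cast [NNReal.nnrpow_def, hα]
    ring_nf

end RightCStarModule

open RightCStarModule

/-- Pedersen-type factorization in Hilbert C*-modules: for a Hilbert `A`-module `H`, `x ∈ H`
and `0 < α < 1/2`, there exists `y` in the closed submodule generated by `x` (the closure of
`x·A`) such that `⟪y,y⟫^{1/2} = ⟪x,x⟫^{1/2 - α}` and `x = y · ⟪x,x⟫^α`. -/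
theorem stmt3 {A E : Type*} [NonUnitalCStarAlgebra A] [PartialOrder A] [StarOrderedRing A]
    [NormedAddCommGroup E] [NormedSpace ℂ E] [SMul Aᵐᵒᵖ E] [RightCStarModule A E] [CompleteSpace E]
    (x : E) (α : ℝ≥0) (hα₀ : 0 < α) (hα : α < 1 / 2) :
    ∃ y ∈ closure {z : E | ∃ a : A, z = x <• a},
      CFC.nnrpow (inner A y y : A) (1 / 2) = CFC.nnrpow (inner A x x : A) (1 / 2 - α) ∧
      x = y <• CFC.nnrpow (inner A x x : A) α := by
  have hβ₀ : 0 < 1 / 2 - α := tsub_pos_of_lt hα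
  have hβα : 1 / 2 - α + α = 1 / 2 := tsub_add_cancel_of_le hα.le
  obtain ⟨y, hy, hyy, hxy⟩ := exists_mem_closure_inner_eq_nnrpow x hα₀ hβ₀ hβα
  have ha : 0 ≤ inner A x x := inner_self_nonneg
  simp only [CFC.nnrpow_eq_pow]
  refine ⟨y, hy, ?_, eq_op_smul_of_inner_mul_eq ?_ ?_⟩
  · rw [hyy, CFC.nnrpow_nnrpow]
    ring_nf
  · rw [hxy, ← CFC.nnrpow_add (by positivity) hα₀, add_right_comm, hβα, add_halves]
    exact CFC.nnrpow_one _ ha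
  · rw [hyy, ← star_inner x y, hxy, (IsSelfAdjoint.of_nonneg CFC.nnrpow_nonneg).star_eq,
      ← CFC.nnrpow_add (by positivity) hα₀, two_mul, add_assoc, hβα]
end

section
/- Let A be a C*-algebra and H a Hilbert A-module for which K(H) has an identity. Then H is projective in the category of Hilbert A-modules with bounded (not necessarily adjointable) module maps: for any Hilbert A-modules H₁, H₂, any surjective bounded module map s : H₂ → H₁ and any bounded module map φ : H → H₁, there exists a bounded module map ψ : H → H₂ with s ∘ ψ = φ. -/
open scoped RightActions

noncomputable section

/-- The notion of Hilbert C⋆-module (right `A`-module) as Mathlib defined it in December 2024. -/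
class CStarModule' (A E : Type*) [NonUnitalSemiring A] [StarRing A] [Module ℂ A]
    [AddCommGroup E] [Module ℂ E] [PartialOrder A] [SMul Aᵐᵒᵖ E] [Norm A] [Norm E]
    extends Inner A E where
  inner_add_right {x} {y} {z} : inner x (y + z) = inner x y + inner x z
  inner_self_nonneg {x} : 0 ≤ inner x x
  inner_self {x} : inner x x = 0 ↔ x = 0
  inner_op_smul_right {a : A} {x y : E} : inner x (y <• a) = inner x y * a
  inner_smul_right_complex {z : ℂ} {x} {y} : inner x (z • y) = z • inner x y
  star_inner x y : star (inner x y) = inner y x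
  norm_eq_sqrt_norm_inner_self x : ‖x‖ = √‖inner x x‖

/-- A bounded `A`-module map between Hilbert `A`-modules. -/
def IsModuleMap (A : Type*) {E F : Type*} [NonUnitalCStarAlgebra A]
    [NormedAddCommGroup E] [Module ℂ E] [SMul Aᵐᵒᵖ E]
    [NormedAddCommGroup F] [Module ℂ F] [SMul Aᵐᵒᵖ F] (T : E →L[ℂ] F) : Prop :=
  ∀ (x : E) (a : A), T (x <• a) = T x <• a

/-- The C*-algebra `K(H)` of "compact" operators on a Hilbert `A`-module `H`. -/
def compactOperators (A E : Type*) [NonUnitalCStarAlgebra A] [PartialOrder A]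
    [StarOrderedRing A] [NormedAddCommGroup E] [NormedSpace ℂ E] [SMul Aᵐᵒᵖ E]
    [CStarModule' A E] : Set (E →L[ℂ] E) :=
  closure (Submodule.span ℂ
    {T : E →L[ℂ] E | ∃ x y : E, ∀ z, T z = x <• (inner A y z : A)} : Set (E →L[ℂ] E))

/-!
A unit `e` of `K(H)` is the identity of `H`: for `d = x - e x`, the relation `θ_{d,d} e = θ_{d,d}`
gives `d <• ⟪d, d⟫ = 0`, hence `⟪d, d⟫² = 0` and `d = 0`. So the identity lies in the closure of
the finite-rank operators, and since the units of `B(H)` are open, some finite-rank module map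
`T = Σ θ_{xᵢ,yᵢ}` is invertible. Now `φ ∘ T = Σ θ_{φ xᵢ,yᵢ}` lifts through `s` to
`ψ₀ = Σ θ_{uᵢ,yᵢ}` for any `uᵢ` with `s uᵢ = φ xᵢ`, and `ψ = ψ₀ ∘ T⁻¹` lifts `φ`.
-/

namespace CStarModule'

open MulOpposite ContinuousLinearMap

/-- A right Hilbert `A`-module is a left Hilbert `Aᵐᵒᵖ`-module for the inner product
`op ⟪x, y⟫`; this gives access to Mathlib's theory of `CStarModule`. -/
instance instCStarModuleMulOpposite {A E : Type*} [NonUnitalCStarAlgebra A] [PartialOrder A]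
    [AddCommGroup E] [Module ℂ E] [SMul Aᵐᵒᵖ E] [Norm E] [CStarModule' A E] :
    CStarModule Aᵐᵒᵖ E where
  inner x y := op (inner A x y)
  inner_add_right := by simp [inner_add_right]
  inner_self_nonneg := inner_self_nonneg (A := A)
  inner_self := by simp [inner_self]
  inner_op_smul_right := by simp [inner_op_smul_right]
  inner_smul_right_complex := by simp [inner_smul_right_complex]
  star_inner x y := by rw [← star_inner (A := A) x y]; rfl
  norm_eq_sqrt_norm_inner_self x := by rw [norm_op, norm_eq_sqrt_norm_inner_self (A := A) x]

section Algebraic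

variable {A E : Type*} [NonUnitalCStarAlgebra A] [PartialOrder A]
  [NormedAddCommGroup E] [NormedSpace ℂ E] [SMul Aᵐᵒᵖ E] [CStarModule' A E]

lemma ext_inner_left {x y : E} (h : ∀ w : E, inner A w x = inner A w y) : x = y := by
  rw [← sub_eq_zero, ← CStarModule.inner_self (A := Aᵐᵒᵖ), CStarModule.inner_sub_right,
    sub_eq_zero]
  exact congrArg op (h _)

lemma op_smul_add (x : E) (a b : A) : x <• (a + b) = x <• a + x <• b :=
  ext_inner_left (A := A) fun w => by simp only [inner_add_right, inner_op_smul_right, mul_add]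

lemma add_op_smul (x y : E) (a : A) : (x + y) <• a = x <• a + y <• a :=
  ext_inner_left (A := A) fun w => by simp only [inner_add_right, inner_op_smul_right, add_mul]

lemma op_smul_mul (x : E) (a b : A) : x <• (a * b) = x <• a <• b :=
  ext_inner_left (A := A) fun w => by simp only [inner_op_smul_right, mul_assoc]

lemma op_smul_smul_complex (x : E) (c : ℂ) (a : A) : x <• (c • a) = c • (x <• a) :=
  ext_inner_left (A := A) fun w => by
    simp only [inner_op_smul_right, inner_smul_right_complex, mul_smul_comm]

lemma smul_complex_op_smul (c : ℂ) (x : E) (a : A) : (c • x) <• a = c • (x <• a) :=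
  ext_inner_left (A := A) fun w => by
    simp only [inner_op_smul_right, inner_smul_right_complex, smul_mul_assoc]

lemma eq_zero_of_op_smul_inner_self_eq_zero {x : E} (h : x <• inner A x x = 0) : x = 0 := by
  have hsq : inner A x x * inner A x x = 0 := by
    rw [← inner_op_smul_right, h]
    exact op_injective (CStarModule.inner_zero_right (A := Aᵐᵒᵖ) (x := x))
  rwa [← inner_self (A := A), ← CStarRing.star_mul_self_eq_zero_iff, star_inner]

end Algebraic

section ModuleMaps

variable {A E F G : Type*} [NonUnitalCStarAlgebra A]
  [NormedAddCommGroup E] [NormedSpace ℂ E] [SMul Aᵐᵒᵖ E]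
  [NormedAddCommGroup F] [NormedSpace ℂ F] [SMul Aᵐᵒᵖ F]
  [NormedAddCommGroup G] [NormedSpace ℂ G] [SMul Aᵐᵒᵖ G]

lemma _root_.IsModuleMap.comp {S : F →L[ℂ] G} {T : E →L[ℂ] F} (hS : IsModuleMap A S)
    (hT : IsModuleMap A T) : IsModuleMap A (S ∘L T) := fun x a => by
  simp only [comp_apply, hT x a, hS (T x) a]

lemma _root_.IsModuleMap.inv {U : (E →L[ℂ] E)ˣ} (hU : IsModuleMap A (U : E →L[ℂ] E)) :
    IsModuleMap A (↑U⁻¹ : E →L[ℂ] E) := fun x a => by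
  have inv_apply_apply : ∀ y, (↑U⁻¹ : E →L[ℂ] E) ((U : E →L[ℂ] E) y) = y := fun y => by
    rw [← mul_apply_eq_comp, U.inv_mul, one_apply_eq_self]
  have apply_inv_apply : ∀ y, (U : E →L[ℂ] E) ((↑U⁻¹ : E →L[ℂ] E) y) = y := fun y => by
    rw [← mul_apply_eq_comp, U.mul_inv, one_apply_eq_self]
  conv_lhs => rw [← apply_inv_apply x, ← hU, inv_apply_apply]

variable (A E F) in
def moduleMaps [PartialOrder A] [CStarModule' A F] : Submodule ℂ (E →L[ℂ] F) where
  carrier := {T | IsModuleMap A T}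
  add_mem' {S T} hS hT x a := by
    simp only [add_apply, hS x a, hT x a, add_op_smul]
  zero_mem' x a := by
    simpa only [zero_apply, zero_smul] using (smul_complex_op_smul (0 : ℂ) (0 : F) a).symm
  smul_mem' c T hT x a := by
    simp only [smul_apply, hT x a, smul_complex_op_smul]

end ModuleMaps

variable {A E F : Type*} [NonUnitalCStarAlgebra A] [PartialOrder A] [StarOrderedRing A]
  [NormedAddCommGroup E] [NormedSpace ℂ E] [SMul Aᵐᵒᵖ E] [CStarModule' A E]
  [NormedAddCommGroup F] [NormedSpace ℂ F] [SMul Aᵐᵒᵖ F] [CStarModule' A F]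

lemma norm_inner_le (x y : E) : ‖inner A x y‖ ≤ ‖x‖ * ‖y‖ :=
  CStarModule.norm_inner_le (A := Aᵐᵒᵖ) E

lemma norm_op_smul_le (x : E) (a : A) : ‖x <• a‖ ≤ ‖x‖ * ‖a‖ := by
  have key : ‖x <• a‖ * ‖x <• a‖ ≤ ‖x <• a‖ * (‖x‖ * ‖a‖) :=
    calc ‖x <• a‖ * ‖x <• a‖ = ‖inner A (x <• a) x * a‖ := by
          rw [← inner_op_smul_right, ← sq, CStarModule.norm_sq_eq Aᵐᵒᵖ]
          rfl
      _ ≤ ‖inner A (x <• a) x‖ * ‖a‖ := norm_mul_le _ _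
      _ ≤ ‖x <• a‖ * ‖x‖ * ‖a‖ := by gcongr; exact norm_inner_le _ _
      _ = ‖x <• a‖ * (‖x‖ * ‖a‖) := mul_assoc _ _ _
  rcases (norm_nonneg (x <• a)).eq_or_lt with h | h
  · rw [← h]
    positivity
  · exact le_of_mul_le_mul_left key h

variable (A) in
def rankOne (u : F) (y : E) : E →L[ℂ] F :=
  LinearMap.mkContinuous
    { toFun z := u <• inner A y z
      map_add' z z' := by simp only [inner_add_right, op_smul_add]
      map_smul' c z := by simp only [inner_smul_right_complex, op_smul_smul_complex,
        RingHom.id_apply] }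
    (‖u‖ * ‖y‖) fun z =>
      calc ‖u <• inner A y z‖ ≤ ‖u‖ * (‖y‖ * ‖z‖) :=
            (norm_op_smul_le _ _).trans (by gcongr; exact norm_inner_le y z)
        _ = ‖u‖ * ‖y‖ * ‖z‖ := (mul_assoc _ _ _).symm

@[simp]
lemma rankOne_apply (u : F) (y z : E) : rankOne A u y z = u <• inner A y z := rfl

lemma rankOne_mem_compactOperators (x y : E) : rankOne A x y ∈ compactOperators A E :=
  subset_closure (Submodule.subset_span ⟨x, y, fun _ => rfl⟩)

lemma isModuleMap_rankOne (u : F) (y : E) : IsModuleMap A (rankOne A u y) := fun z a => by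
  simp only [rankOne_apply, inner_op_smul_right, op_smul_mul]

lemma _root_.IsModuleMap.comp_rankOne {G : Type*} [NormedAddCommGroup G] [NormedSpace ℂ G]
    [SMul Aᵐᵒᵖ G] [CStarModule' A G] {T : F →L[ℂ] G} (hT : IsModuleMap A T) (u : F) (y : E) :
    T ∘L rankOne A u y = rankOne A (T u) y := by
  ext z
  exact hT u _

variable (A E) in
def finiteRankOperators : Submodule ℂ (E →L[ℂ] E) :=
  Submodule.span ℂ {T : E →L[ℂ] E | ∃ x y : E, ∀ z, T z = x <• inner A y z}

lemma compactOperators_eq_closure :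
    compactOperators A E = closure (finiteRankOperators A E : Set (E →L[ℂ] E)) :=
  rfl

lemma finiteRankOperators_le {p : Submodule ℂ (E →L[ℂ] E)}
    (hp : ∀ x y : E, rankOne A x y ∈ p) : finiteRankOperators A E ≤ p := by
  rw [finiteRankOperators, Submodule.span_le]
  rintro T ⟨x, y, hT⟩
  obtain rfl : T = rankOne A x y := ContinuousLinearMap.ext hT
  exact hp x y

lemma finiteRankOperators_le_moduleMaps : finiteRankOperators A E ≤ moduleMaps A E E :=
  finiteRankOperators_le isModuleMap_rankOne

lemma exists_lift_comp_of_mem_finiteRankOperators {E₁ E₂ : Type*}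
    [NormedAddCommGroup E₁] [NormedSpace ℂ E₁] [SMul Aᵐᵒᵖ E₁] [CStarModule' A E₁]
    [NormedAddCommGroup E₂] [NormedSpace ℂ E₂] [SMul Aᵐᵒᵖ E₂] [CStarModule' A E₂]
    {s : E₂ →L[ℂ] E₁} (hs : IsModuleMap A s) (hsurj : Function.Surjective s)
    {φ : E →L[ℂ] E₁} (hφ : IsModuleMap A φ) {T : E →L[ℂ] E} (hT : T ∈ finiteRankOperators A E) :
    ∃ ψ : E →L[ℂ] E₂, IsModuleMap A ψ ∧ s ∘L ψ = φ ∘L T := by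
  let liftable : Submodule ℂ (E →L[ℂ] E) :=
    ((moduleMaps A E E₂).map (compL ℂ E E₂ E₁ s : (E →L[ℂ] E₂) →ₗ[ℂ] (E →L[ℂ] E₁))).comap
      (compL ℂ E E E₁ φ : (E →L[ℂ] E) →ₗ[ℂ] (E →L[ℂ] E₁))
  suffices hle : finiteRankOperators A E ≤ liftable from hle hT
  refine finiteRankOperators_le fun x y => ?_
  obtain ⟨u, hu⟩ := hsurj (φ x)
  refine ⟨rankOne A u y, isModuleMap_rankOne u y, ?_⟩
  show s ∘L rankOne A u y = φ ∘L rankOne A x y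
  rw [hs.comp_rankOne, hφ.comp_rankOne, hu]

lemma eq_one_of_forall_rankOne_mul_eq {e : E →L[ℂ] E}
    (he : ∀ x : E, rankOne A x x * e = rankOne A x x) : e = 1 := by
  ext x
  set d := x - e x
  have hd : rankOne A d d d = 0 := by
    rw [map_sub, ← mul_apply_eq_comp, he, sub_self]
  exact (sub_eq_zero.mp (eq_zero_of_op_smul_inner_self_eq_zero hd)).symm

end CStarModule'

lemma exists_isUnit_mem_of_one_mem_closure {R : Type*} [NormedRing R] [HasSummableGeomSeries R]
    {s : Set R} (h : 1 ∈ closure s) : ∃ T ∈ s, IsUnit T := by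
  obtain ⟨T, hT, hTs⟩ := mem_closure_iff.1 h _ Units.isOpen isUnit_one
  exact ⟨T, hTs, hT⟩

open CStarModule' ContinuousLinearMap in
theorem stmt8_general {A E E₁ E₂ : Type*} [NonUnitalCStarAlgebra A] [PartialOrder A]
    [StarOrderedRing A]
    [NormedAddCommGroup E] [NormedSpace ℂ E] [SMul Aᵐᵒᵖ E] [CStarModule' A E]
    [CompleteSpace E]
    [NormedAddCommGroup E₁] [NormedSpace ℂ E₁] [SMul Aᵐᵒᵖ E₁] [CStarModule' A E₁]
    [NormedAddCommGroup E₂] [NormedSpace ℂ E₂] [SMul Aᵐᵒᵖ E₂] [CStarModule' A E₂]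
    (hunit : ∃ e ∈ compactOperators A E, ∀ T ∈ compactOperators A E,
      e * T = T ∧ T * e = T)
    (s : E₂ →L[ℂ] E₁) (hs : IsModuleMap A s) (hsurj : Function.Surjective s)
    (φ : E →L[ℂ] E₁) (hφ : IsModuleMap A φ) :
    ∃ ψ : E →L[ℂ] E₂, IsModuleMap A ψ ∧ s.comp ψ = φ := by
  obtain ⟨e, he_mem, he⟩ := hunit
  have he_one : e = 1 :=
    eq_one_of_forall_rankOne_mul_eq fun x => (he _ (rankOne_mem_compactOperators x x)).2
  rw [he_one, compactOperators_eq_closure] at he_mem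
  obtain ⟨_, hT, U, rfl⟩ := exists_isUnit_mem_of_one_mem_closure he_mem
  obtain ⟨ψ, hψ, hsψ⟩ := exists_lift_comp_of_mem_finiteRankOperators hs hsurj hφ hT
  refine ⟨ψ ∘L ↑U⁻¹, hψ.comp (finiteRankOperators_le_moduleMaps hT).inv, ?_⟩
  rw [← comp_assoc, hsψ, comp_assoc, ← mul_def, U.mul_inv]
  exact φ.comp_id

/-- If `K(H)` has an identity, then the Hilbert `A`-module `H` is projective in the
category of Hilbert `A`-modules with bounded (not necessarily adjointable) module maps:
for any surjective bounded module map `s : H₂ → H₁` and any bounded module map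
`φ : H → H₁`, there is a bounded module map `ψ : H → H₂` with `s ∘ ψ = φ`. -/
theorem stmt8 {A E E₁ E₂ : Type*} [NonUnitalCStarAlgebra A] [PartialOrder A]
    [StarOrderedRing A]
    [NormedAddCommGroup E] [NormedSpace ℂ E] [SMul Aᵐᵒᵖ E] [CStarModule' A E]
    [CompleteSpace E]
    [NormedAddCommGroup E₁] [NormedSpace ℂ E₁] [SMul Aᵐᵒᵖ E₁] [CStarModule' A E₁]
    [CompleteSpace E₁]
    [NormedAddCommGroup E₂] [NormedSpace ℂ E₂] [SMul Aᵐᵒᵖ E₂] [CStarModule' A E₂]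
    [CompleteSpace E₂]
    (hunit : ∃ e ∈ compactOperators A E, ∀ T ∈ compactOperators A E,
      e * T = T ∧ T * e = T)
    (s : E₂ →L[ℂ] E₁) (hs : IsModuleMap A s) (hsurj : Function.Surjective s)
    (φ : E →L[ℂ] E₁) (hφ : IsModuleMap A φ) :
    ∃ ψ : E →L[ℂ] E₂, IsModuleMap A ψ ∧ s.comp ψ = φ :=
  stmt8_general hunit s hs hsurj φ hφ

end
end
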